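/- Let Q ∈ R^{D×K} have singular value decomposition Q = U Σ V^T with Σ = diag(σ_1,...,σ_r), and let η > 0. Then the singular value thresholding operator W* = U·diag({σ_i − η}_+)·V^T is the unique minimizer of the function W ↦ (1/2)‖W − Q‖_F^2 + η‖W‖_* over R^{D×K}. -/

import Mathlib

/-!
Write `d = (σᵢ - η)₊` and `c = min(σᵢ, η) / η`, so that `σ - d = η c` and `c d = d`. Then
`Q - W* = η G` for `G = U diag(c) Vᵀ`, a matrix of spectral norm at most one with
`⟨G, W*⟩ = ∑ dᵢ = ‖W*‖_*`. Diagonalising `WᵀW` shows `⟨G, W⟩ ≤ ‖W‖_*` whenever `‖G‖ ≤ 1`,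
so `G` is a subgradient of the nuclear norm at `W*`. Expanding
`‖W - Q‖² = ‖W - W*‖² + ‖W* - Q‖² - 2η⟨G, W - W*⟩` then gives
`f(W) ≥ f(W*) + ½‖W - W*‖²`, which is minimality and uniqueness at once.
-/
open Finset Matrix

/-- The square root of a positive semidefinite matrix, as `Matrix.PosSemidef.sqrt` was defined
in Mathlib of December 2024 (that definition has since been removed). -/
noncomputable def Matrix.PosSemidef.sqrt {n 𝕜 : Type*} [Fintype n] [RCLike 𝕜] [PartialOrder 𝕜] [DecidableEq n]
    {A : Matrix n n 𝕜} (hA : A.PosSemidef) : Matrix n n 𝕜 :=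
  hA.1.eigenvectorUnitary.1 * diagonal ((↑) ∘ (fun x => Real.sqrt x) ∘ hA.1.eigenvalues) *
    (star hA.1.eigenvectorUnitary : Matrix n n 𝕜)

/-- The nuclear (trace) norm of a real matrix: the trace of `√(WᵀW)`. -/
noncomputable def nuclearNorm {D K : ℕ} (W : Matrix (Fin D) (Fin K) ℝ) : ℝ :=
  Matrix.trace (Matrix.PosSemidef.sqrt (Matrix.posSemidef_conjTranspose_mul_self W))

open scoped Matrix.Norms.L2Operator RealInnerProductSpace

namespace Matrix

variable {m n r : Type*} [Fintype m] [Fintype n] [Fintype r]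

theorem sum_sum_mul_eq_trace_transpose_mul (A B : Matrix m n ℝ) :
    ∑ j, ∑ k, A j k * B j k = trace (Aᵀ * B) := by
  simp only [trace, Matrix.diag, mul_apply, transpose_apply]
  exact Finset.sum_comm

theorem sum_sum_mul_diagonal_mul_transpose [DecidableEq r] {U : Matrix m r ℝ}
    {V : Matrix n r ℝ} (hU : Uᵀ * U = 1) (hV : Vᵀ * V = 1) (a b : r → ℝ) :
    ∑ j, ∑ k, (U * diagonal a * Vᵀ) j k * (U * diagonal b * Vᵀ) j k = ∑ i, a i * b i := by
  rw [sum_sum_mul_eq_trace_transpose_mul]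
  simp only [transpose_mul, transpose_transpose, diagonal_transpose, Matrix.mul_assoc]
  rw [← Matrix.mul_assoc Uᵀ, hU, Matrix.one_mul, ← Matrix.mul_assoc (diagonal a),
    diagonal_mul_diagonal, trace_mul_cycle', ← Matrix.mul_assoc, hV, Matrix.one_mul,
    trace_diagonal]

theorem eq_of_sum_sum_sub_sq_nonpos {A B : Matrix m n ℝ}
    (h : ∑ j, ∑ k, (A j k - B j k) ^ 2 ≤ 0) : A = B := by
  have hzero := le_antisymm h (by positivity)
  rw [← Fintype.sum_prod_type', Fintype.sum_eq_zero_iff_of_nonneg (fun _ => sq_nonneg _)] at hzero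
  ext j k
  exact sub_eq_zero.mp (pow_eq_zero_iff two_ne_zero |>.mp (congrFun hzero (j, k)))

theorem trace_eq_sum_dotProduct_mulVec [DecidableEq n] (A : Matrix n n ℝ)
    (b : OrthonormalBasis n ℝ (EuclideanSpace ℝ n)) :
    A.trace = ∑ i, b i ⬝ᵥ A *ᵥ b i := by
  rw [← trace_toLin_eq A (EuclideanSpace.basisFun n ℝ).toBasis,
    ← toEuclideanLin_eq_toLin_orthonormal, LinearMap.trace_eq_sum_inner _ b]
  refine Finset.sum_congr rfl fun i _ => ?_
  simp [EuclideanSpace.inner_eq_star_dotProduct, dotProduct_comm]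

theorem inner_toLp_mulVec_toLp_mulVec (A B : Matrix m n ℝ) (x y : n → ℝ) :
    ⟪WithLp.toLp 2 (A *ᵥ x), WithLp.toLp 2 (B *ᵥ y)⟫ = x ⬝ᵥ (Aᵀ * B) *ᵥ y := by
  rw [EuclideanSpace.inner_toLp_toLp, star_trivial, ← mulVec_mulVec, dotProduct_mulVec,
    ← mulVec_transpose, dotProduct_comm]

theorem norm_toLp_mulVec_eigenvectorBasis [DecidableEq n] (W : Matrix m n ℝ) (i : n) :
    ‖WithLp.toLp 2 (W *ᵥ (posSemidef_conjTranspose_mul_self W).1.eigenvectorBasis i)‖ =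
      √((posSemidef_conjTranspose_mul_self W).1.eigenvalues i) := by
  set hH := (posSemidef_conjTranspose_mul_self W).1
  set b := hH.eigenvectorBasis
  have hb : b i ⬝ᵥ b i = 1 := by
    have h := real_inner_self_eq_norm_sq (b i)
    rwa [b.orthonormal.1 i, one_pow, EuclideanSpace.inner_eq_star_dotProduct, star_trivial] at h
  rw [← Real.sqrt_sq (norm_nonneg _), ← real_inner_self_eq_norm_sq,
    inner_toLp_mulVec_toLp_mulVec, ← conjTranspose_eq_transpose_of_trivial,
    hH.mulVec_eigenvectorBasis, dotProduct_smul, hb, smul_eq_mul, mul_one]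

theorem l2_opNorm_le_one_of_transpose_mul_self_eq_one [DecidableEq n] {U : Matrix m n ℝ}
    (hU : Uᵀ * U = 1) : ‖U‖ ≤ 1 := by
  have h : ‖U‖ * ‖U‖ ≤ 1 := by
    rw [← l2_opNorm_conjTranspose_mul_self, conjTranspose_eq_transpose_of_trivial, hU,
      cstar_norm_def, map_one]
    exact ContinuousLinearMap.norm_id_le
  nlinarith [norm_nonneg U]

theorem l2_opNorm_mul_diagonal_mul_transpose_le_one [DecidableEq n] [DecidableEq r]
    {U : Matrix m r ℝ} {V : Matrix n r ℝ} (hU : Uᵀ * U = 1) (hV : Vᵀ * V = 1) {c : r → ℝ}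
    (hc : ∀ i, |c i| ≤ 1) :
    ‖U * diagonal c * Vᵀ‖ ≤ 1 := by
  have hVt : ‖Vᵀ‖ ≤ 1 := by
    rw [← conjTranspose_eq_transpose_of_trivial, l2_opNorm_conjTranspose]
    exact l2_opNorm_le_one_of_transpose_mul_self_eq_one hV
  have hc' : ‖(diagonal c : Matrix r r ℝ)‖ ≤ 1 := by
    rw [l2_opNorm_diagonal]
    exact pi_norm_le_iff_of_nonneg zero_le_one |>.mpr hc
  calc ‖U * diagonal c * Vᵀ‖ ≤ ‖U‖ * ‖(diagonal c : Matrix r r ℝ)‖ * ‖Vᵀ‖ :=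
        (l2_opNorm_mul _ _).trans (mul_le_mul_of_nonneg_right (l2_opNorm_mul _ _) (norm_nonneg _))
    _ ≤ 1 * 1 * 1 := by
        gcongr
        exact l2_opNorm_le_one_of_transpose_mul_self_eq_one hU
    _ = 1 := by norm_num

open scoped MatrixOrder in
theorem PosSemidef.sqrt_eq_cfcSqrt [DecidableEq n] {A : Matrix n n ℝ} (hA : A.PosSemidef) :
    hA.sqrt = CFC.sqrt A := by
  rw [CFC.sqrt_eq_cfc, cfc_nnreal_eq_real _ A, hA.1.cfc_eq, IsHermitian.cfc,
    Unitary.conjStarAlgAut_apply, Matrix.PosSemidef.sqrt]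
  congr 3
  funext i
  simp [hA.eigenvalues_nonneg i]

end Matrix

theorem nuclearNorm_eq_sum_sqrt_eigenvalues {D K : ℕ} (W : Matrix (Fin D) (Fin K) ℝ) :
    nuclearNorm W = ∑ i, √((posSemidef_conjTranspose_mul_self W).1.eigenvalues i) := by
  rw [nuclearNorm, PosSemidef.sqrt, trace_mul_cycle, Unitary.coe_star_mul_self, one_mul,
    trace_diagonal]
  rfl

open scoped MatrixOrder in
theorem nuclearNorm_mul_diagonal_mul_transpose {D K r : ℕ} {U : Matrix (Fin D) (Fin r) ℝ}
    {V : Matrix (Fin K) (Fin r) ℝ} (hU : Uᵀ * U = 1) (hV : Vᵀ * V = 1) {d : Fin r → ℝ}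
    (hd : 0 ≤ d) : nuclearNorm (U * diagonal d * Vᵀ) = ∑ i, d i := by
  have hsqrt : CFC.sqrt ((U * diagonal d * Vᵀ)ᵀ * (U * diagonal d * Vᵀ)) =
      V * diagonal d * Vᵀ := by
    refine CFC.sqrt_unique ?_ ?_
    · simp only [transpose_mul, transpose_transpose, diagonal_transpose, Matrix.mul_assoc]
      rw [← Matrix.mul_assoc Uᵀ, hU, Matrix.one_mul, ← Matrix.mul_assoc Vᵀ, hV, Matrix.one_mul]
    · exact ((posSemidef_diagonal_iff.mpr hd).mul_mul_conjTranspose_same V).nonneg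
  rw [nuclearNorm, PosSemidef.sqrt_eq_cfcSqrt, conjTranspose_eq_transpose_of_trivial, hsqrt,
    trace_mul_cycle, hV, one_mul, trace_diagonal]

theorem sum_sum_mul_le_nuclearNorm {D K : ℕ} {G : Matrix (Fin D) (Fin K) ℝ} (hG : ‖G‖ ≤ 1)
    (W : Matrix (Fin D) (Fin K) ℝ) : ∑ j, ∑ k, G j k * W j k ≤ nuclearNorm W := by
  set b := (posSemidef_conjTranspose_mul_self W).1.eigenvectorBasis
  have hGb : ∀ i, ‖WithLp.toLp 2 (G *ᵥ b i)‖ ≤ 1 := fun i => by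
    simpa [b.orthonormal.1 i] using
      (l2_opNorm_mulVec G (b i)).trans (mul_le_mul_of_nonneg_right hG (norm_nonneg _))
  calc ∑ j, ∑ k, G j k * W j k
        = ∑ i, ⟪WithLp.toLp 2 (G *ᵥ b i), WithLp.toLp 2 (W *ᵥ b i)⟫ := by
        rw [sum_sum_mul_eq_trace_transpose_mul, trace_eq_sum_dotProduct_mulVec _ b]
        simp only [inner_toLp_mulVec_toLp_mulVec]
    _ ≤ ∑ i, ‖WithLp.toLp 2 (G *ᵥ b i)‖ * ‖WithLp.toLp 2 (W *ᵥ b i)‖ :=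
        Finset.sum_le_sum fun i _ => real_inner_le_norm _ _
    _ ≤ ∑ i, ‖WithLp.toLp 2 (W *ᵥ b i)‖ :=
        Finset.sum_le_sum fun i _ => mul_le_of_le_one_left (norm_nonneg _) (hGb i)
    _ = nuclearNorm W := by
        simp only [b, norm_toLp_mulVec_eigenvectorBasis, nuclearNorm_eq_sum_sqrt_eigenvalues]

theorem nuclearNorm_add_sum_sum_mul_sub_le {D K : ℕ} {G W₀ : Matrix (Fin D) (Fin K) ℝ}
    (hG : ‖G‖ ≤ 1) (hGW₀ : ∑ j, ∑ k, G j k * W₀ j k = nuclearNorm W₀)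
    (W : Matrix (Fin D) (Fin K) ℝ) :
    nuclearNorm W₀ + ∑ j, ∑ k, G j k * (W j k - W₀ j k) ≤ nuclearNorm W := by
  simp only [mul_sub, Finset.sum_sub_distrib]
  linarith [sum_sum_mul_le_nuclearNorm hG W]

theorem add_half_sum_sum_sq_le_of_subgradient {m n : Type*} [Fintype m] [Fintype n]
    (φ : Matrix m n ℝ → ℝ) {η : ℝ} (hη : 0 ≤ η) {Q W₀ G : Matrix m n ℝ} (hQ : Q - W₀ = η • G)
    (hG : ∀ W, φ W₀ + ∑ j, ∑ k, G j k * (W j k - W₀ j k) ≤ φ W) (W : Matrix m n ℝ) :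
    (1/2 : ℝ) * (∑ j, ∑ k, (W₀ j k - Q j k)^2) + η * φ W₀
        + (1/2 : ℝ) * (∑ j, ∑ k, (W j k - W₀ j k)^2) ≤
      (1/2 : ℝ) * (∑ j, ∑ k, (W j k - Q j k)^2) + η * φ W := by
  have hQ' : ∀ j k, Q j k = W₀ j k + η * G j k := fun j k => by
    simpa [sub_eq_iff_eq_add'] using congrFun₂ hQ j k
  have hexpand : ∑ j, ∑ k, (W j k - Q j k)^2 = ∑ j, ∑ k, (W j k - W₀ j k)^2
      + ∑ j, ∑ k, (W₀ j k - Q j k)^2 - 2 * η * ∑ j, ∑ k, G j k * (W j k - W₀ j k) := by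
    simp only [hQ', Finset.mul_sum, ← Finset.sum_add_distrib, ← Finset.sum_sub_distrib]
    exact Finset.sum_congr rfl fun j _ => Finset.sum_congr rfl fun k _ => by ring
  nlinarith [mul_le_mul_of_nonneg_left (hG W) hη]

theorem exists_nuclearNorm_subgradient_of_eq_thresholding {D K r : ℕ} {η : ℝ} (hη : 0 < η)
    {U : Matrix (Fin D) (Fin r) ℝ} {V : Matrix (Fin K) (Fin r) ℝ} (hU : Uᵀ * U = 1)
    (hV : Vᵀ * V = 1) {σ : Fin r → ℝ} (hσ : ∀ i, 0 ≤ σ i) {Q W₀ : Matrix (Fin D) (Fin K) ℝ}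
    (hQ : Q = U * diagonal σ * Vᵀ) (hW₀ : W₀ = U * diagonal (fun i => max (σ i - η) 0) * Vᵀ) :
    ∃ G, Q - W₀ = η • G ∧
      ∀ W, nuclearNorm W₀ + ∑ j, ∑ k, G j k * (W j k - W₀ j k) ≤ nuclearNorm W := by
  set d : Fin r → ℝ := fun i => max (σ i - η) 0
  set c : Fin r → ℝ := fun i => min (σ i) η / η
  have hc : ∀ i, |c i| ≤ 1 := fun i => by
    rw [abs_div, abs_of_pos hη, div_le_one hη, abs_of_nonneg (le_min (hσ i) hη.le)]
    exact min_le_right _ _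
  have hσd : (fun i => σ i - d i) = η • c := funext fun i => by
    simp only [Pi.smul_apply, smul_eq_mul, d, c, mul_div_cancel₀ _ hη.ne']
    rcases le_total (σ i) η with h | h <;> simp [h]
  have hcd : ∀ i, c i * d i = d i := fun i => by
    rcases le_total (σ i) η with h | h
    · simp [d, h]
    · simp [c, d, h, hη.ne']
  refine ⟨U * diagonal c * Vᵀ, ?_, nuclearNorm_add_sum_sum_mul_sub_le
    (l2_opNorm_mul_diagonal_mul_transpose_le_one hU hV hc) ?_⟩
  · rw [hQ, hW₀, ← Matrix.sub_mul, ← Matrix.mul_sub, diagonal_sub, hσd, diagonal_smul,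
      Matrix.mul_smul, Matrix.smul_mul]
  · rw [hW₀, sum_sum_mul_diagonal_mul_transpose hU hV,
      nuclearNorm_mul_diagonal_mul_transpose (d := d) hU hV fun i => le_max_right _ _]
    exact Finset.sum_congr rfl fun i _ => hcd i

/-- Singular value thresholding is the proximal operator of the nuclear norm
(Theorem 2.1 of Cai, Candès, Shen 2010). -/
theorem singular_value_thresholding
    (D K r : ℕ) (η : ℝ) (hη : 0 < η)
    (U : Matrix (Fin D) (Fin r) ℝ) (V : Matrix (Fin K) (Fin r) ℝ) (σ : Fin r → ℝ)
    (hU : Uᵀ * U = 1) (hV : Vᵀ * V = 1) (hσ : ∀ i, 0 < σ i)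
    (Q : Matrix (Fin D) (Fin K) ℝ) (hQ : Q = U * Matrix.diagonal σ * Vᵀ)
    (Wstar : Matrix (Fin D) (Fin K) ℝ)
    (hW : Wstar = U * Matrix.diagonal (fun i => max (σ i - η) 0) * Vᵀ) :
    (∀ W : Matrix (Fin D) (Fin K) ℝ,
      (1/2 : ℝ) * (∑ j, ∑ k, (Wstar j k - Q j k)^2) + η * nuclearNorm Wstar ≤
      (1/2 : ℝ) * (∑ j, ∑ k, (W j k - Q j k)^2) + η * nuclearNorm W) ∧
    (∀ W : Matrix (Fin D) (Fin K) ℝ,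
      (1/2 : ℝ) * (∑ j, ∑ k, (W j k - Q j k)^2) + η * nuclearNorm W =
      (1/2 : ℝ) * (∑ j, ∑ k, (Wstar j k - Q j k)^2) + η * nuclearNorm Wstar →
      W = Wstar) := by
  obtain ⟨G, hQW, hsubgrad⟩ :=
    exists_nuclearNorm_subgradient_of_eq_thresholding hη hU hV (fun i => (hσ i).le) hQ hW
  have key := add_half_sum_sum_sq_le_of_subgradient nuclearNorm hη.le hQW hsubgrad
  refine ⟨fun W => ?_, fun W hWeq => eq_of_sum_sum_sub_sq_nonpos ?_⟩
  · linarith [key W, (by positivity : (0 : ℝ) ≤ ∑ j, ∑ k, (W j k - Wstar j k) ^ 2)]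
  · linarith [key W]
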